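/- Let G be a group and F : G → G a group endomorphism; write G^F = {g ∈ G : F(g) = g}. Let N be a normal subgroup of G with F(N) ⊆ N, let H be a subgroup of G with N ⊆ H and F(H) ⊆ H, and let S be a subset of N. Define X₀ = {x ∈ H : x⁻¹·F(x) ∈ S} and L⁻¹(S) = {x ∈ G : x⁻¹·F(x) ∈ S}. Assume that for every x ∈ G with x⁻¹·F(x) ∈ N there exists g ∈ G^F with g⁻¹·x ∈ N. Then: (i) L⁻¹(S) = ⋃_{g ∈ G^F} g·X₀; (ii) for g, g' ∈ G^F, if g·X₀ ∩ g'·X₀ ≠ ∅ then g⁻¹·g' ∈ H ∩ G^F; and (iii) for g, g' ∈ G^F with g⁻¹·g' ∈ H ∩ G^F one has g·X₀ = g'·X₀. Consequently L⁻¹(S) is the disjoint union of the translates g·X₀ over a set of coset representatives g of G^F modulo H^F := H ∩ G^F. -/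
import Mathlib


/-- The set `X₀ = {x ∈ H : x⁻¹·F(x) ∈ S}`. -/
def langX0 {G : Type*} [Group G] (F : G →* G) (H : Subgroup G) (S : Set G) : Set G :=
  {x : G | x ∈ H ∧ x⁻¹ * F x ∈ S}

private lemma trans_sub {G : Type*} [Group G] (F : G →* G) (H : Subgroup G) (S : Set G)
    (h : G) (hh : h ∈ H) (hFh : F h = h) :
    (fun x => h * x) '' langX0 F H S ⊆ langX0 F H S := by
  rintro _ ⟨x, ⟨hxH, hxS⟩, rfl⟩
  refine ⟨H.mul_mem hh hxH, ?_⟩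
  have : (h * x)⁻¹ * F (h * x) = x⁻¹ * F x := by
    rw [map_mul, hFh]; group
  rwa [this]

/-- Abstract form of the decomposition `L⁻¹(S) = ⨿_{g ∈ G^F/H^F} g·X₀`:
(i) `L⁻¹(S)` is the union of the translates `g·X₀` over `g ∈ G^F`;
(ii) two translates `g·X₀`, `g'·X₀` (with `g, g' ∈ G^F`) meet only if `g⁻¹g' ∈ H ∩ G^F`;
(iii) if `g⁻¹g' ∈ H ∩ G^F` then `g·X₀ = g'·X₀`. -/
theorem stmt_10 {G : Type*} [Group G] (F : G →* G) (N H : Subgroup G) [N.Normal]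
    (hFN : ∀ n ∈ N, F n ∈ N) (hNH : N ≤ H) (hFH : ∀ h ∈ H, F h ∈ H)
    (S : Set G) (hS : S ⊆ (N : Set G))
    (hLang : ∀ x : G, x⁻¹ * F x ∈ N → ∃ g : G, F g = g ∧ g⁻¹ * x ∈ N) :
    ({x : G | x⁻¹ * F x ∈ S} =
        ⋃ g ∈ {g : G | F g = g}, (fun x => g * x) '' langX0 F H S) ∧
      (∀ g g' : G, F g = g → F g' = g' →
        ((fun x => g * x) '' langX0 F H S ∩ (fun x => g' * x) '' langX0 F H S).Nonempty →
          g⁻¹ * g' ∈ H ∧ F (g⁻¹ * g') = g⁻¹ * g') ∧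
      (∀ g g' : G, F g = g → F g' = g' → g⁻¹ * g' ∈ H →
        (fun x => g * x) '' langX0 F H S = (fun x => g' * x) '' langX0 F H S) := by
  refine ⟨?_, ?_, ?_⟩
  · ext x
    simp only [Set.mem_setOf_eq, Set.mem_iUnion, Set.mem_image]
    constructor
    · intro hx
      obtain ⟨g, hg, hgx⟩ := hLang x (hS hx)
      refine ⟨g, hg, g⁻¹ * x, ⟨hNH hgx, ?_⟩, by group⟩
      have : (g⁻¹ * x)⁻¹ * F (g⁻¹ * x) = x⁻¹ * F x := by
        rw [map_mul, map_inv, hg]; group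
      rwa [this]
    · rintro ⟨g, hg, y, ⟨hyH, hyS⟩, rfl⟩
      have : (g * y)⁻¹ * F (g * y) = y⁻¹ * F y := by
        rw [map_mul, hg]; group
      rwa [this]
  · rintro g g' hg hg' ⟨z, ⟨x, ⟨hxH, -⟩, hzx⟩, ⟨y, ⟨hyH, -⟩, hzy⟩⟩
    refine ⟨?_, by rw [map_mul, map_inv, hg, hg']⟩
    have : g⁻¹ * g' = x * y⁻¹ := by
      have := hzx.trans hzy.symm
      simp only at this
      calc g⁻¹ * g' = g⁻¹ * (g' * y) * y⁻¹ := by group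
        _ = g⁻¹ * (g * x) * y⁻¹ := by rw [this]
        _ = x * y⁻¹ := by group
    rw [this]; exact H.mul_mem hxH (H.inv_mem hyH)
  · intro g g' hg hg' hH
    have hF : F (g'⁻¹ * g) = g'⁻¹ * g := by rw [map_mul, map_inv, hg, hg']
    have hH' : g'⁻¹ * g ∈ H := by
      have := H.inv_mem hH; rwa [mul_inv_rev, inv_inv] at this
    apply Set.eq_of_subset_of_subset
    · rintro _ ⟨x, hx, rfl⟩
      have : (g'⁻¹ * g) * x ∈ langX0 F H S :=
        trans_sub F H S _ hH' hF ⟨x, hx, rfl⟩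
      exact ⟨(g'⁻¹ * g) * x, this, by group⟩
    · rintro _ ⟨x, hx, rfl⟩
      have hF2 : F (g⁻¹ * g') = g⁻¹ * g' := by rw [map_mul, map_inv, hg, hg']
      have : (g⁻¹ * g') * x ∈ langX0 F H S :=
        trans_sub F H S _ hH hF2 ⟨x, hx, rfl⟩
      exact ⟨(g⁻¹ * g') * x, this, by group⟩
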